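/- The circular altitude of a finite simple graph equals the circular altitude of its core. -/

import Mathlib

open SimpleGraph

/-!
Circular altitude is monotone under homomorphisms. Given a homomorphism `r : G →g H` and an
ordering `f` of `H`, order `G` by `f ∘ r`, breaking ties arbitrarily. Adjacent vertices have
distinct images under `r`, so every monotonic cycle of `G` is mapped by `r` to a monotonic cycle
of `H` of the same length. As `G` and its core are homomorphically equivalent, their circular
altitudes agree.
-/

/-- A monotonic cycle with respect to an ordering relation `lt`:
a nonempty list of distinct vertices, strictly increasing w.r.t. `lt`,
and if it has length at least 2, consecutive vertices are adjacent and
the last vertex is adjacent to the first. -/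
def MonoCycle {V : Type*} (G : SimpleGraph V) (lt : V → V → Prop) (l : List V) : Prop :=
  l ≠ [] ∧ l.Nodup ∧ l.Chain' lt ∧
    (2 ≤ l.length → l.Chain' G.Adj ∧
      ∀ a b, l.head? = some a → l.getLast? = some b → G.Adj b a)

/-- The maximum length of a monotonic cycle for the ordering relation `lt`. -/
noncomputable def maxCycleLen {V : Type*} (G : SimpleGraph V) (lt : V → V → Prop) : ℕ :=
  sSup {m | ∃ l : List V, MonoCycle G lt l ∧ l.length = m}

/-- The circular altitude of a graph: the minimum over all linear orderings
(injections of the vertex set into `ℕ`) of the maximum length of a monotonic cycle. -/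
noncomputable def circAlt {V : Type*} (G : SimpleGraph V) : ℕ :=
  sInf {n | ∃ f : V → ℕ, Function.Injective f ∧
    maxCycleLen G (fun a b => f a < f b) = n}

/-- A graph is a core graph if every homomorphism from it to itself is an
isomorphism. -/
def IsCoreGraph {W : Type*} (C : SimpleGraph W) : Prop :=
  ∀ φ : C →g C, ∃ ψ : C ≃g C, ∀ v, ψ v = φ v

section Homomorphism

variable {V W : Type*} {G : SimpleGraph V} {H : SimpleGraph W}

theorem MonoCycle.map (r : G →g H) {lt : V → V → Prop} (f : W → ℕ)
    (compat : ∀ a b, G.Adj a b → lt a b → f (r a) < f (r b))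
    {l : List V} (hl : MonoCycle G lt l) :
    MonoCycle H (fun a b => f a < f b) (l.map r) := by
  obtain ⟨hne, -, hlt, hcyc⟩ := hl
  have hchain : (l.map r).IsChain (fun a b => f a < f b) := by
    rw [List.isChain_map, List.isChain_iff_getElem]
    intro i hi
    obtain ⟨hadj, -⟩ := hcyc (by omega)
    exact compat _ _ (List.isChain_iff_getElem.mp hadj i hi)
      (List.isChain_iff_getElem.mp hlt i hi)
  have hnodup : (l.map r).Nodup :=
    (((List.isChain_map f).mpr hchain).pairwise.nodup).of_map f
  refine ⟨by simpa using hne, hnodup, hchain, fun h2 => ?_⟩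
  obtain ⟨hadj, hclose⟩ := hcyc (by simpa using h2)
  refine ⟨(List.isChain_map r).mpr (hadj.imp fun _ _ h => r.map_adj h), fun a b ha hb => ?_⟩
  rw [List.head?_map, Option.map_eq_some_iff] at ha
  rw [List.getLast?_map, Option.map_eq_some_iff] at hb
  obtain ⟨a, ha, rfl⟩ := ha
  obtain ⟨b, hb, rfl⟩ := hb
  exact r.map_adj (hclose a b ha hb)

theorem bddAbove_monoCycle_length [Finite V] (G : SimpleGraph V) (lt : V → V → Prop) :
    BddAbove {m | ∃ l : List V, MonoCycle G lt l ∧ l.length = m} := by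
  have := Fintype.ofFinite V
  exact ⟨Fintype.card V, fun _ ⟨l, hl, hm⟩ => hm ▸ hl.2.1.length_le_card⟩

theorem maxCycleLen_le_of_hom [Finite W] (r : G →g H) {lt : V → V → Prop} (f : W → ℕ)
    (compat : ∀ a b, G.Adj a b → lt a b → f (r a) < f (r b)) :
    maxCycleLen G lt ≤ maxCycleLen H (fun a b => f a < f b) := by
  refine csSup_le_csSup' (bddAbove_monoCycle_length H _) ?_
  rintro _ ⟨l, hl, rfl⟩
  exact ⟨l.map r, hl.map r f compat, List.length_map r⟩

theorem exists_maxCycleLen_eq_circAlt [Countable V] (G : SimpleGraph V) :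
    ∃ f : V → ℕ, Function.Injective f ∧
      maxCycleLen G (fun a b => f a < f b) = circAlt G := by
  obtain ⟨f, hf⟩ := exists_injective_nat V
  exact Nat.sInf_mem (s := {n | ∃ f : V → ℕ, Function.Injective f ∧
    maxCycleLen G (fun a b => f a < f b) = n}) ⟨_, f, hf, rfl⟩

theorem circAlt_le_maxCycleLen {f : V → ℕ} (hf : Function.Injective f) :
    circAlt G ≤ maxCycleLen G (fun a b => f a < f b) :=
  Nat.sInf_le ⟨f, hf, rfl⟩

theorem exists_injective_refining [Finite V] (p : V → ℕ) :
    ∃ g : V → ℕ, Function.Injective g ∧ ∀ a b, g a < g b → p a ≤ p b := by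
  have := Fintype.ofFinite V
  set N := Fintype.card V
  let e : V → ℕ := fun v => Fintype.equivFin V v
  have he : ∀ v, e v < N := fun v => (Fintype.equivFin V v).isLt
  have refines : ∀ a b, p a * N + e a ≤ p b * N + e b → p a ≤ p b := by
    intro a b h
    by_contra! hba
    have : (p b + 1) * N ≤ p a * N := Nat.mul_le_mul_right N hba
    linarith [he b]
  refine ⟨fun v => p v * N + e v, fun a b hab => ?_, fun a b h => refines a b h.le⟩
  have hp : p a = p b := le_antisymm (refines a b hab.le) (refines b a hab.ge)
  have hea : e a = e b := by simp only [hp] at hab; omega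
  exact (Fintype.equivFin V).injective (Fin.val_injective hea)

theorem circAlt_le_of_hom [Finite V] [Finite W] (r : G →g H) : circAlt G ≤ circAlt H := by
  obtain ⟨f, hf, hfH⟩ := exists_maxCycleLen_eq_circAlt H
  obtain ⟨g, hg, hgf⟩ := exists_injective_refining (f ∘ r)
  have compat : ∀ a b, G.Adj a b → g a < g b → f (r a) < f (r b) := fun a b hab hlt =>
    (hgf a b hlt).lt_of_ne fun h => (r.map_adj hab).ne (hf h)
  calc circAlt G ≤ maxCycleLen G (fun a b => g a < g b) := circAlt_le_maxCycleLen hg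
    _ ≤ maxCycleLen H (fun a b => f a < f b) := maxCycleLen_le_of_hom r f compat
    _ = circAlt H := hfH

end Homomorphism

theorem circAlt_core_general {V : Type*} [Finite V] (G : SimpleGraph V) (C : G.Subgraph)
    (h₁ : Nonempty (G →g C.coe)) :
    circAlt C.coe = circAlt G :=
  le_antisymm (circAlt_le_of_hom C.hom) (circAlt_le_of_hom h₁.some)

/-- The circular altitude of a finite graph equals the circular altitude of its
core: a subgraph `C` which is a core graph and is homomorphically equivalent
to `G`. -/
theorem circAlt_core {V : Type*} [Finite V] (G : SimpleGraph V) (C : G.Subgraph)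
    (hcore : IsCoreGraph C.coe)
    (h₁ : Nonempty (G →g C.coe)) (h₂ : Nonempty (C.coe →g G)) :
    circAlt C.coe = circAlt G :=
  circAlt_core_general G C h₁
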